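/- A subcontext S = (H, N, J) (with J ⊆ I) is a closed-subcontext of the finite formal context K = (G, M, I) if and only if for every X ⊆ H one has X^{JJ} ⊇ X^{JI} and for every X ⊆ N one has X^{JJ} ⊇ X^{JI}, where X^J denotes derivation with respect to J and X^{JI} means first deriving with J, then with I. -/

import Mathlib

variable {G M : Type*} [Fintype G] [Fintype M]

/-- Attribute derivation A' of an object set A w.r.t. incidence I. -/
def extDerivFCA (I : Set (G × M)) (A : Set G) : Set M := {m | ∀ g ∈ A, (g, m) ∈ I}

/-- Object derivation B' of an attribute set B w.r.t. incidence I. -/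
def intDeriv (I : Set (G × M)) (B : Set M) : Set G := {g | ∀ m ∈ B, (g, m) ∈ I}

/-- (A,B) is a formal concept of (G,M,I). -/
def IsConcept (I : Set (G × M)) (A : Set G) (B : Set M) : Prop :=
  extDerivFCA I A = B ∧ intDeriv I B = A

/-- Derivation of an object set inside the (sub)context (H,N,J). -/
def subExtDeriv (N : Set M) (J : Set (G × M)) (A : Set G) : Set M :=
  {n ∈ N | ∀ g ∈ A, (g, n) ∈ J}

/-- Derivation of an attribute set inside the (sub)context (H,N,J). -/
def subIntDeriv (H : Set G) (J : Set (G × M)) (B : Set M) : Set G :=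
  {h ∈ H | ∀ n ∈ B, (h, n) ∈ J}

/-- (A,B) is a formal concept of the context (H,N,J). -/
def IsSubConcept (H : Set G) (N : Set M) (J : Set (G × M)) (A : Set G) (B : Set M) : Prop :=
  A ⊆ H ∧ B ⊆ N ∧ subExtDeriv N J A = B ∧ subIntDeriv H J B = A

/-- (H,N,J) is a closed-subcontext of (G,M,I). -/
def IsClosedSubcontext (I : Set (G × M)) (H : Set G) (N : Set M) (J : Set (G × M)) : Prop :=
  J ⊆ I ∩ H ×ˢ N ∧ ∀ A B, IsSubConcept H N J A B → IsConcept I A B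

/-- Binary join in the concept lattice of (G,M,I). -/
def conceptJoin (I : Set (G × M)) (c d : Set G × Set M) : Set G × Set M :=
  (intDeriv I (c.2 ∩ d.2), c.2 ∩ d.2)

/-- Binary meet in the concept lattice of (G,M,I). -/
def conceptMeet (I : Set (G × M)) (c d : Set G × Set M) : Set G × Set M :=
  (c.1 ∩ d.1, extDerivFCA I (c.1 ∩ d.1))

/-- S is a sublattice of the concept lattice of (G,M,I). -/
def IsConceptSublattice (I : Set (G × M)) (S : Set (Set G × Set M)) : Prop :=
  S.Nonempty ∧ (∀ c ∈ S, IsConcept I c.1 c.2) ∧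
    ∀ c ∈ S, ∀ d ∈ S, conceptJoin I c d ∈ S ∧ conceptMeet I c d ∈ S

/-- Image of the concept set of the subcontext [H,N] under φ₁(A,B)=(A'',A'). -/
def phi1Image (I : Set (G × M)) (H : Set G) (N : Set M) : Set (Set G × Set M) :=
  {c | ∃ A B, IsSubConcept H N (I ∩ H ×ˢ N) A B ∧
      c = (intDeriv I (extDerivFCA I A), extDerivFCA I A)}

/-- Image of the concept set of the subcontext [H,N] under φ₂(A,B)=(B',B''). -/
def phi2Image (I : Set (G × M)) (H : Set G) (N : Set M) : Set (Set G × Set M) :=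
  {c | ∃ A B, IsSubConcept H N (I ∩ H ×ˢ N) A B ∧
      c = (intDeriv I B, extDerivFCA I (intDeriv I B))}

/-- [H,N] is (isomorphic to) a contranominal scale of dimension k in (G,M,I). -/
def IsContranominal (I : Set (G × M)) (k : ℕ) (H : Set G) (N : Set M) : Prop :=
  ∃ f : Fin k → G, ∃ g : Fin k → M, Function.Injective f ∧ Function.Injective g ∧
    H = Set.range f ∧ N = Set.range g ∧ ∀ i j, (f i, g j) ∈ I ↔ i ≠ j

/-- O is a minimal object generator of the concept with extent A. -/
def IsMinObjGen (I : Set (G × M)) (A : Set G) (O : Set G) : Prop :=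
  intDeriv I (extDerivFCA I O) = A ∧ ∀ P ⊂ O, intDeriv I (extDerivFCA I P) ≠ A

/-- Q is a minimal attribute generator of the concept with intent B. -/
def IsMinAttGen (I : Set (G × M)) (B : Set M) (Q : Set M) : Prop :=
  extDerivFCA I (intDeriv I Q) = B ∧ ∀ P ⊂ Q, extDerivFCA I (intDeriv I P) ≠ B

/-- Union of all minimal object generators of the atoms of a Boolean suborder
given by an order embedding f of the powerset of Fin k. -/
def genH (I : Set (G × M)) {k : ℕ} (f : Set (Fin k) → Set G × Set M) : Set G :=
  {g | ∃ i : Fin k, ∃ O : Set G, IsMinObjGen I (f {i}).1 O ∧ g ∈ O}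

/-- Union of all minimal attribute generators of the coatoms of a Boolean suborder. -/
def genN (I : Set (G × M)) {k : ℕ} (f : Set (Fin k) → Set G × Set M) : Set M :=
  {m | ∃ i : Fin k, ∃ Q : Set M, IsMinAttGen I (f {i}ᶜ).2 Q ∧ m ∈ Q}

/-! For `X ⊆ H` the pair `(X^{JJ}, X^J)` is a concept of the subcontext (dually for `X ⊆ N`), so
closedness forces `X^{JI} = X^{JJ}`. Conversely, `J ⊆ I` makes every `J`-derivation part of the
corresponding `I`-derivation; a concept `(A, B)` of the subcontext has `A = B^J` and `B = A^J`, so the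
reverse inclusions `B^{JI} ⊆ B^{JJ}` and `A^{JI} ⊆ A^{JJ}` give `A^I = B` and `B^I = A`. -/

section Subcontext

omit [Fintype G] [Fintype M]

variable {I J : Set (G × M)} {H : Set G} {N : Set M} {X A : Set G} {Y B : Set M}

theorem subExtDeriv_subset : subExtDeriv N J A ⊆ N := fun _ hn => hn.1

theorem subIntDeriv_subset : subIntDeriv H J B ⊆ H := fun _ hg => hg.1

theorem subExtDeriv_subset_extDerivFCA (hJI : J ⊆ I) : subExtDeriv N J A ⊆ extDerivFCA I A :=
  fun _ hn g hg => hJI (hn.2 g hg)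

theorem subIntDeriv_subset_intDeriv (hJI : J ⊆ I) : subIntDeriv H J B ⊆ intDeriv I B :=
  fun _ hg n hn => hJI (hg.2 n hn)

theorem subset_subIntDeriv_subExtDeriv (hX : X ⊆ H) :
    X ⊆ subIntDeriv H J (subExtDeriv N J X) :=
  fun g hg => ⟨hX hg, fun _ hn => hn.2 g hg⟩

theorem subset_subExtDeriv_subIntDeriv (hY : Y ⊆ N) :
    Y ⊆ subExtDeriv N J (subIntDeriv H J Y) :=
  fun n hn => ⟨hY hn, fun _ hg => hg.2 n hn⟩

theorem subExtDeriv_subIntDeriv_subExtDeriv (hX : X ⊆ H) :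
    subExtDeriv N J (subIntDeriv H J (subExtDeriv N J X)) = subExtDeriv N J X :=
  Set.Subset.antisymm (fun _ hn => ⟨hn.1, fun g hg => hn.2 g (subset_subIntDeriv_subExtDeriv hX hg)⟩)
    (subset_subExtDeriv_subIntDeriv subExtDeriv_subset)

theorem subIntDeriv_subExtDeriv_subIntDeriv (hY : Y ⊆ N) :
    subIntDeriv H J (subExtDeriv N J (subIntDeriv H J Y)) = subIntDeriv H J Y :=
  Set.Subset.antisymm (fun _ hg => ⟨hg.1, fun n hn => hg.2 n (subset_subExtDeriv_subIntDeriv hY hn)⟩)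
    (subset_subIntDeriv_subExtDeriv subIntDeriv_subset)

theorem isSubConcept_subIntDeriv_subExtDeriv (hX : X ⊆ H) :
    IsSubConcept H N J (subIntDeriv H J (subExtDeriv N J X)) (subExtDeriv N J X) :=
  ⟨subIntDeriv_subset, subExtDeriv_subset, subExtDeriv_subIntDeriv_subExtDeriv hX, rfl⟩

theorem isSubConcept_subIntDeriv_subExtDeriv_subIntDeriv (hY : Y ⊆ N) :
    IsSubConcept H N J (subIntDeriv H J Y) (subExtDeriv N J (subIntDeriv H J Y)) :=
  ⟨subIntDeriv_subset, subExtDeriv_subset, rfl, subIntDeriv_subExtDeriv_subIntDeriv hY⟩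

theorem IsSubConcept.isConcept (hJI : J ⊆ I) (h : IsSubConcept H N J A B)
    (hA : extDerivFCA I A ⊆ B) (hB : intDeriv I B ⊆ A) : IsConcept I A B := by
  obtain ⟨-, -, hAB, hBA⟩ := h
  exact ⟨hA.antisymm (hAB ▸ subExtDeriv_subset_extDerivFCA hJI),
    hB.antisymm (hBA ▸ subIntDeriv_subset_intDeriv hJI)⟩

end Subcontext

theorem stmt4 (I : Set (G × M)) (H : Set G) (N : Set M) (J : Set (G × M))
    (hJ : J ⊆ I ∩ H ×ˢ N) :
    IsClosedSubcontext I H N J ↔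
      ((∀ X ⊆ H, intDeriv I (subExtDeriv N J X) ⊆ subIntDeriv H J (subExtDeriv N J X)) ∧
       (∀ X ⊆ N, extDerivFCA I (subIntDeriv H J X) ⊆ subExtDeriv N J (subIntDeriv H J X))) := by
  constructor
  · rintro ⟨-, hclosed⟩
    exact ⟨fun X hX => (hclosed _ _ (isSubConcept_subIntDeriv_subExtDeriv hX)).2.le,
      fun Y hY => (hclosed _ _ (isSubConcept_subIntDeriv_subExtDeriv_subIntDeriv hY)).1.le⟩
  · rintro ⟨hext, hint⟩
    refine ⟨hJ, fun A B hsub => hsub.isConcept (fun _ hp => (hJ hp).1) ?_ ?_⟩ <;>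
      obtain ⟨hAH, hBN, hAB, hBA⟩ := hsub
    · simpa only [hBA, hAB] using hint B hBN
    · simpa only [hAB, hBA] using hext A hAH
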